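/- For β ∈ ℝ with 0 < |β| < 1, define ϱ₂ = (e^β - 1 - β)/β² and ϱ₃ = (e^β - 1 - β - β²/2)/β³. Then ϱ₂ - 2ϱ₃ ≠ 0, so the constant β* = (1 + β·ϱ₂)/(ϱ₂ - 2ϱ₃) is well-defined. -/

import Mathlib

open Real Finset

lemma key (x : ℝ) (h0 : 0 < x) (h1 : x < 1) : Real.exp x < (2 + x) / (2 - x) := by
  have hb := Real.exp_bound' (le_of_lt h0) (le_of_lt h1) (n := 5) (by norm_num)
  have hsum : (∑ m ∈ Finset.range 5, x ^ m / m.factorial) =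
      1 + x + x^2/2 + x^3/6 + x^4/24 := by
    norm_num [Finset.sum_range_succ, Nat.factorial]
  rw [hsum] at hb
  norm_num [Nat.factorial] at hb
  rw [lt_div_iff₀ (by linarith)]
  nlinarith [pow_pos h0 3, pow_pos h0 4, pow_pos h0 5, pow_pos h0 6]

/-- For 0 < |β| < 1, ϱ₂ - 2ϱ₃ ≠ 0, so β* = (1 + βϱ₂)/(ϱ₂ - 2ϱ₃) is well-defined. -/
theorem stmt3 (β : ℝ) (hβ0 : 0 < |β|) (hβ1 : |β| < 1) :
    (Real.exp β - 1 - β) / β ^ 2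
      - 2 * ((Real.exp β - 1 - β - β ^ 2 / 2) / β ^ 3) ≠ 0 := by
  have hβ : β ≠ 0 := by
    intro h; rw [h] at hβ0; simp at hβ0
  have hexp := Real.exp_pos β
  have hf : (β - 2) * Real.exp β + β + 2 ≠ 0 := by
    rcases lt_or_gt_of_ne hβ with hneg | hpos
    · have h1 : -β < 1 := by
        have := abs_lt.mp hβ1; linarith [this.1]
      have hk := key (-β) (by linarith) h1
      rw [Real.exp_neg, lt_div_iff₀ (by linarith)] at hk
      have hinv := mul_inv_cancel₀ (ne_of_gt hexp)
      nlinarith [hk, hexp, hinv]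
    · have h1 : β < 1 := lt_of_le_of_lt (le_abs_self β) hβ1
      have hk := key β hpos h1
      rw [lt_div_iff₀ (by linarith)] at hk
      nlinarith
  intro h
  apply hf
  field_simp at h
  have h2 : 2 * β^2 * ((β - 2) * Real.exp β + β + 2) = 0 := by linear_combination 2 * β ^ 2 * h
  have hb2 : (2:ℝ) * β^2 ≠ 0 := by positivity
  exact (mul_eq_zero.mp h2).resolve_left hb2
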